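/- arXiv:2311.17385 — 3 statements merged into one kernel-verified Lean document; each statement's English description precedes it below -/
import Mathlib

section
/- Let q ∈ k with q ≠ 0, q ≠ 1, q ≠ −1, and let a, b, c, d ∈ k with ad − bc ≠ 0. Suppose (c·x + d·y)(a·x + b·y) = q·(a·x + b·y)(c·x + d·y) holds in the quantum plane k_q⟨x,y⟩ = k⟨x,y⟩/(yx − qxy). Then b = 0 and c = 0. -/
/-!
Expanding, `(cx + dy)(ax + by) - q(ax + by)(cx + dy)` equals
`(1 - q)ac·x² + (1 - q²)bc·xy + (1 - q)bd·y²`, using only `yx = q·xy`. The monomials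
`x², xy, y²` are linearly independent in the quantum plane, as the two representations
`x ↦ diag(1, q), y ↦ E₁₂` and `x ↦ E₁₂, y ↦ diag(q, 1)` on `k²` show. Hence `ac = bc = bd = 0`
since `q ≠ ±1`, and `ad ≠ bc` leaves only `b = c = 0`.
-/

/-- The defining relation of the quantum plane `k_q⟨x,y⟩ = k⟨x,y⟩/(yx − q·xy)`. -/
inductive QuantumPlaneRel (k : Type*) [Field k] (q : k) :
    FreeAlgebra k (Fin 2) → FreeAlgebra k (Fin 2) → Prop
  | rel : QuantumPlaneRel k q (FreeAlgebra.ι k 1 * FreeAlgebra.ι k 0)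
      (q • (FreeAlgebra.ι k 0 * FreeAlgebra.ι k 1))

theorem sub_smul_mul_eq_of_mul_eq_smul_mul {R B : Type*} [CommRing R] [Ring B] [Algebra R B]
    {q : R} {X Y : B} (h : Y * X = q • (X * Y)) (a b c d : R) :
    (c • X + d • Y) * (a • X + b • Y) - q • ((a • X + b • Y) * (c • X + d • Y)) =
      ((1 - q) * (a * c)) • (X * X) + ((1 - q ^ 2) * (b * c)) • (X * Y) +
        ((1 - q) * (b * d)) • (Y * Y) := by
  simp only [add_mul, mul_add, smul_mul_smul_comm, h, smul_smul, smul_add]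
  module

theorem eq_zero_and_eq_zero_of_mul_eq_zero {K : Type*} [Field K] {a b c d : K}
    (hac : a * c = 0) (hbc : b * c = 0) (hbd : b * d = 0) (hdet : a * d - b * c ≠ 0) :
    b = 0 ∧ c = 0 := by
  rw [hbc, sub_zero] at hdet
  obtain ⟨ha, hd⟩ := mul_ne_zero_iff.mp hdet
  exact ⟨(mul_eq_zero.mp hbd).resolve_right hd, (mul_eq_zero.mp hac).resolve_left ha⟩

namespace QuantumPlane

variable {k : Type*} [Field k] (q : k)

local notation "𝒪" => RingQuot (QuantumPlaneRel k q)

noncomputable def lift {B : Type*} [Ring B] [Algebra k B] (X Y : B) (h : Y * X = q • (X * Y)) :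
    𝒪 →ₐ[k] B :=
  RingQuot.liftAlgHom k ⟨FreeAlgebra.lift k ![X, Y], by rintro _ _ ⟨⟩; simp [h]⟩

@[simp]
theorem lift_mkAlgHom_ι {B : Type*} [Ring B] [Algebra k B] (X Y : B) (h : Y * X = q • (X * Y))
    (i : Fin 2) :
    lift q X Y h (RingQuot.mkAlgHom k (QuantumPlaneRel k q) (FreeAlgebra.ι k i)) = ![X, Y] i := by
  simp [lift, RingQuot.liftAlgHom_mkAlgHom_apply]

abbrev genX : 𝒪 := RingQuot.mkAlgHom k (QuantumPlaneRel k q) (FreeAlgebra.ι k 0)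

abbrev genY : 𝒪 := RingQuot.mkAlgHom k (QuantumPlaneRel k q) (FreeAlgebra.ι k 1)

theorem genY_mul_genX : genY q * genX q = q • (genX q * genY q) := by
  rw [← map_mul, ← map_mul, ← map_smul]
  exact RingQuot.mkAlgHom_rel k QuantumPlaneRel.rel

theorem eq_zero_of_smul_sq_add_smul_mul_add_smul_sq_eq_zero {α β γ : k}
    (h : α • (genX q * genX q) + β • (genX q * genY q) + γ • (genY q * genY q) = 0) :
    α = 0 ∧ β = 0 ∧ γ = 0 := by
  have hxy : !![0, 1; 0, 0] * !![1, 0; 0, q] = q • (!![1, 0; 0, q] * !![0, 1; 0, (0 : k)]) := by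
    ext i j; fin_cases i <;> fin_cases j <;> simp
  have hyx : !![q, 0; 0, 1] * !![0, 1; 0, 0] = q • (!![0, 1; 0, 0] * !![q, 0; 0, (1 : k)]) := by
    ext i j; fin_cases i <;> fin_cases j <;> simp
  have hαβ := congr($(congrArg (lift q _ _ hxy) h) 0)
  have hγ := congr($(congrArg (lift q _ _ hyx) h) 1 1)
  simp [funext_iff] at hαβ hγ
  exact ⟨hαβ.1, hαβ.2, hγ⟩

end QuantumPlane

theorem stmt_13_general {k : Type*} [Field k] (q a b c d : k)
    (hq1 : q ≠ 1) (hqm1 : q ≠ -1) (hdet : a * d - b * c ≠ 0)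
    (x y : RingQuot (QuantumPlaneRel k q))
    (hx : x = RingQuot.mkAlgHom k (QuantumPlaneRel k q) (FreeAlgebra.ι k 0))
    (hy : y = RingQuot.mkAlgHom k (QuantumPlaneRel k q) (FreeAlgebra.ι k 1))
    (hrel : (c • x + d • y) * (a • x + b • y) = q • ((a • x + b • y) * (c • x + d • y))) :
    b = 0 ∧ c = 0 := by
  subst hx hy
  rw [← sub_eq_zero, sub_smul_mul_eq_of_mul_eq_smul_mul (QuantumPlane.genY_mul_genX q)] at hrel
  obtain ⟨hac, hbc, hbd⟩ :=
    QuantumPlane.eq_zero_of_smul_sq_add_smul_mul_add_smul_sq_eq_zero q hrel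
  have h1q : 1 - q ≠ 0 := sub_ne_zero.mpr hq1.symm
  have h1q2 : 1 - q ^ 2 ≠ 0 := by
    rw [sub_ne_zero, ne_comm, sq, Ne, mul_self_eq_one_iff]
    exact not_or.mpr ⟨hq1, hqm1⟩
  exact eq_zero_and_eq_zero_of_mul_eq_zero ((mul_eq_zero.mp hac).resolve_left h1q)
    ((mul_eq_zero.mp hbc).resolve_left h1q2) ((mul_eq_zero.mp hbd).resolve_left h1q) hdet

/-- In the quantum plane with `q ≠ 0, ±1`, if
`(cx + dy)(ax + by) = q·(ax + by)(cx + dy)` with `ad − bc ≠ 0`, then `b = c = 0`. -/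
theorem stmt_13 {k : Type*} [Field k] [CharZero k] (q a b c d : k)
    (hq0 : q ≠ 0) (hq1 : q ≠ 1) (hqm1 : q ≠ -1) (hdet : a * d - b * c ≠ 0)
    (x y : RingQuot (QuantumPlaneRel k q))
    (hx : x = RingQuot.mkAlgHom k (QuantumPlaneRel k q) (FreeAlgebra.ι k 0))
    (hy : y = RingQuot.mkAlgHom k (QuantumPlaneRel k q) (FreeAlgebra.ι k 1))
    (hrel : (c • x + d • y) * (a • x + b • y) = q • ((a • x + b • y) * (c • x + d • y))) :
    b = 0 ∧ c = 0 :=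
  stmt_13_general q a b c d hq1 hqm1 hdet x y hx hy hrel
end

section
/- Let k be a field of characteristic 0 and a, b, c, d ∈ k with ad − bc ≠ 0. Suppose (c·x + d·y)(a·x + b·y) − (a·x + b·y)(c·x + d·y) = (a·x + b·y)² holds in the Jordan plane k⟨x,y⟩/(yx − xy − x²). Then b = 0 and a = d. -/
/-- The defining relation of the Jordan plane `k⟨x,y⟩/(yx − xy − x²)`. -/
inductive JordanPlaneRel (k : Type*) [Field k] :
    FreeAlgebra k (Fin 2) → FreeAlgebra k (Fin 2) → Prop
  | rel : JordanPlaneRel k (FreeAlgebra.ι k 1 * FreeAlgebra.ι k 0)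
      (FreeAlgebra.ι k 0 * FreeAlgebra.ι k 1 + FreeAlgebra.ι k 0 * FreeAlgebra.ι k 0)

/-!
Expanding bilinearly, `[cx + dy, ax + by] = (ad − bc)(yx − xy) = (ad − bc) x²`, while
`(ax + by)² = a²x² + ab(2xy + x²) + b²y²`. The monomials `x², xy, y²` are linearly independent in
the Jordan plane: it acts on `k[t][X]` by `x ↦ X`, `y ↦ X² d/dX + tX`, and applied to `1` they
give `X²`, `tX²`, `(t + t²)X²`. Comparing coefficients yields `b² = 0` and `ad = a²`, and then
`ad − bc ≠ 0` gives `a ≠ 0`, so `a = d`.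
-/

open Polynomial

section SmulAddSmul

variable {R A : Type*} [CommRing R] [Ring A] [Module R A] [IsScalarTower R A A]
  [SMulCommClass R A A]

theorem smul_add_smul_mul_sub_mul_comm (a b c d : R) (x y : A) :
    (c • x + d • y) * (a • x + b • y) - (a • x + b • y) * (c • x + d • y)
      = (a * d - b * c) • (y * x - x * y) := by
  simp only [add_mul, mul_add, smul_mul_smul_comm]
  module

theorem smul_add_smul_sq (a b : R) (x y : A) :
    (a • x + b • y) ^ 2 = a ^ 2 • x ^ 2 + (a * b) • (x * y + y * x) + b ^ 2 • y ^ 2 := by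
  simp only [sq, add_mul, mul_add, smul_mul_smul_comm]
  module

end SmulAddSmul

namespace JordanPlane

variable (k : Type*) [Field k]

noncomputable def x : RingQuot (JordanPlaneRel k) :=
  RingQuot.mkAlgHom k (JordanPlaneRel k) (FreeAlgebra.ι k 0)

noncomputable def y : RingQuot (JordanPlaneRel k) :=
  RingQuot.mkAlgHom k (JordanPlaneRel k) (FreeAlgebra.ι k 1)

theorem y_mul_x : y k * x k = x k * y k + x k ^ 2 := by
  simpa only [x, y, map_mul, map_add, sq] using RingQuot.mkAlgHom_rel k JordanPlaneRel.rel

variable {k} {B : Type*} [CommRing B] [Algebra k B]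

noncomputable def toEnd (s : B) : RingQuot (JordanPlaneRel k) →ₐ[k] Module.End B B[X] :=
  RingQuot.liftAlgHom k ⟨FreeAlgebra.lift k ![LinearMap.mulLeft B X,
      LinearMap.mulLeft B (X ^ 2) ∘ₗ derivative + LinearMap.mulLeft B (C s * X)],
    by
      rintro _ _ ⟨⟩
      refine LinearMap.ext fun p => ?_
      simp [Module.End.mul_apply, derivative_mul]
      ring⟩

@[simp]
theorem toEnd_x (s : B) (p : B[X]) : toEnd s (x k) p = X * p := by
  simp [toEnd, x]

@[simp]
theorem toEnd_y (s : B) (p : B[X]) :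
    toEnd s (y k) p = X ^ 2 * derivative p + C s * X * p := by
  simp [toEnd, y, mul_assoc]

theorem toEnd_x_sq_one (s : B) : toEnd s (x k ^ 2) 1 = X ^ 2 := by
  simp [sq, Module.End.mul_apply]

theorem toEnd_x_mul_y_one (s : B) : toEnd s (x k * y k) 1 = C s * X ^ 2 := by
  simp [Module.End.mul_apply]
  ring

theorem toEnd_y_sq_one (s : B) : toEnd s (y k ^ 2) 1 = C (s + s ^ 2) * X ^ 2 := by
  simp [sq, Module.End.mul_apply]
  ring

theorem linearIndependent_x_sq_x_mul_y_y_sq :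
    LinearIndependent k ![x k ^ 2, x k * y k, y k ^ 2] := by
  rw [Fintype.linearIndependent_iff]
  intro g hg
  have h : g 0 • 1 + g 1 • X + g 2 • (X + X ^ 2) = (0 : k[X]) := by
    have h := congr(((toEnd (X : k[X]) $hg) 1).coeff 2)
    rw [Fin.sum_univ_three, map_add, map_add, map_smul, map_smul, map_smul] at h
    simpa only [LinearMap.add_apply, LinearMap.smul_apply, Matrix.cons_val, toEnd_x_sq_one,
      toEnd_x_mul_y_one, toEnd_y_sq_one, coeff_add, coeff_smul, coeff_C_mul_X_pow,
      coeff_X_pow_self, if_true, map_zero, LinearMap.zero_apply, coeff_zero] using h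
  have h0 : g 0 = 0 := by simpa using congr(($h).coeff 0)
  have h1 : g 1 + g 2 = 0 := by simpa [coeff_one, coeff_X] using congr(($h).coeff 1)
  have h2 : g 2 = 0 := by simpa [coeff_one, coeff_X] using congr(($h).coeff 2)
  intro i
  fin_cases i <;> simp only [Fin.zero_eta, Fin.mk_one, Fin.reduceFinMk]
  · exact h0
  · linear_combination h1 - h2
  · exact h2

end JordanPlane

theorem stmt_14_general {k : Type*} [Field k] (a b c d : k)
    (hdet : a * d - b * c ≠ 0)
    (x y : RingQuot (JordanPlaneRel k))
    (hx : x = RingQuot.mkAlgHom k (JordanPlaneRel k) (FreeAlgebra.ι k 0))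
    (hy : y = RingQuot.mkAlgHom k (JordanPlaneRel k) (FreeAlgebra.ι k 1))
    (hrel : (c • x + d • y) * (a • x + b • y) - (a • x + b • y) * (c • x + d • y)
      = (a • x + b • y) ^ 2) :
    b = 0 ∧ a = d := by
  obtain rfl : x = JordanPlane.x k := hx
  obtain rfl : y = JordanPlane.y k := hy
  have h := (smul_add_smul_mul_sub_mul_comm a b c d (JordanPlane.x k) (JordanPlane.y k)).symm.trans
    (hrel.trans (smul_add_smul_sq a b (JordanPlane.x k) (JordanPlane.y k)))
  rw [JordanPlane.y_mul_x] at h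
  have hcoeff := Fintype.linearIndependent_iff.mp JordanPlane.linearIndependent_x_sq_x_mul_y_y_sq
    ![a * d - b * c - a ^ 2 - a * b, -(2 * a * b), -b ^ 2] (by
      simp only [Fin.sum_univ_three, Matrix.cons_val]
      linear_combination (norm := module) h)
  have hx_sq : a * d - b * c - a ^ 2 - a * b = 0 := hcoeff 0
  have hb : b = 0 := by simpa using hcoeff 2
  subst hb
  have ha : a ≠ 0 := by
    rintro rfl
    simp at hdet
  exact ⟨rfl, mul_left_cancel₀ ha (by linear_combination -hx_sq)⟩

/-- In the Jordan plane, if `(cx + dy)(ax + by) − (ax + by)(cx + dy) = (ax + by)²`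
with `ad − bc ≠ 0`, then `b = 0` and `a = d`. -/
theorem stmt_14 {k : Type*} [Field k] [CharZero k] (a b c d : k)
    (hdet : a * d - b * c ≠ 0)
    (x y : RingQuot (JordanPlaneRel k))
    (hx : x = RingQuot.mkAlgHom k (JordanPlaneRel k) (FreeAlgebra.ι k 0))
    (hy : y = RingQuot.mkAlgHom k (JordanPlaneRel k) (FreeAlgebra.ι k 1))
    (hrel : (c • x + d • y) * (a • x + b • y) - (a • x + b • y) * (c • x + d • y)
      = (a • x + b • y) ^ 2) :
    b = 0 ∧ a = d :=
  stmt_14_general a b c d hdet x y hx hy hrel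
end

section
/- Equip P = k[x1,x2,x3] with the Poisson bracket {x1,x2} = x1x2, {x2,x3} = 3x1² + 2x1x2 + x2x3, {x3,x1} = x1² + x1x3 (superpotential Ω = x1³ + x1²x2 + x1x2x3). Set w1 = x2, w2 = x1 + x3, w3 = x1². Then {w1,w2} = w1w2 + 3w3, {w2,w3} = 2w2w3, {w3,w1} = 2w3w1, and each of w1, w2, w3 is invariant under the algebra automorphism φ: x1 ↦ −x1, x2 ↦ x2, x3 ↦ 2x1 + x3. -/
open MvPolynomial

/-- The Jacobian Poisson bracket `{f,g} = det Jac(f,g,Ω)` on `k[x₁,x₂,x₃]`. -/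
noncomputable def jacBracket {k : Type*} [Field k] (Ω f g : MvPolynomial (Fin 3) k) :
    MvPolynomial (Fin 3) k :=
  pderiv 0 f * (pderiv 1 g * pderiv 2 Ω - pderiv 2 g * pderiv 1 Ω)
  + pderiv 1 f * (pderiv 2 g * pderiv 0 Ω - pderiv 0 g * pderiv 2 Ω)
  + pderiv 2 f * (pderiv 0 g * pderiv 1 Ω - pderiv 1 g * pderiv 0 Ω)

section JacBracket

variable {k : Type*} [Field k] (Ω : MvPolynomial (Fin 3) k)

theorem jacBracket_X_one_X_zero_add_X_two :
    jacBracket Ω (X 1) (X 0 + X 2) = pderiv 0 Ω - pderiv 2 Ω := by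
  simp [jacBracket]

theorem jacBracket_X_zero_add_X_two_X_zero_sq :
    jacBracket Ω (X 0 + X 2) (X 0 ^ 2) = 2 * X 0 * pderiv 1 Ω := by
  simp [jacBracket]

theorem jacBracket_X_zero_sq_X_one :
    jacBracket Ω (X 0 ^ 2) (X 1) = 2 * X 0 * pderiv 2 Ω := by
  simp [jacBracket]

end JacBracket

section Superpotential

variable {R : Type*} [CommRing R]

theorem pderiv_zero_superpotential :
    pderiv 0 (X 0 ^ 3 + X 0 ^ 2 * X 1 + X 0 * X 1 * X 2 : MvPolynomial (Fin 3) R) =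
      3 * X 0 ^ 2 + 2 * X 0 * X 1 + X 1 * X 2 := by
  simp
  ring

theorem pderiv_one_superpotential :
    pderiv 1 (X 0 ^ 3 + X 0 ^ 2 * X 1 + X 0 * X 1 * X 2 : MvPolynomial (Fin 3) R) =
      X 0 ^ 2 + X 0 * X 2 := by
  simp [mul_comm]

theorem pderiv_two_superpotential :
    pderiv 2 (X 0 ^ 3 + X 0 ^ 2 * X 1 + X 0 * X 1 * X 2 : MvPolynomial (Fin 3) R) =
      X 0 * X 1 := by
  simp

end Superpotential

theorem stmt_18_general {k : Type*} [Field k] :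
    letI Ω : MvPolynomial (Fin 3) k := X 0 ^ 3 + X 0 ^ 2 * X 1 + X 0 * X 1 * X 2
    letI w1 : MvPolynomial (Fin 3) k := X 1
    letI w2 : MvPolynomial (Fin 3) k := X 0 + X 2
    letI w3 : MvPolynomial (Fin 3) k := X 0 ^ 2
    letI φ : MvPolynomial (Fin 3) k →ₐ[k] MvPolynomial (Fin 3) k :=
      aeval ![-X 0, X 1, 2 * X 0 + X 2]
    jacBracket Ω w1 w2 = w1 * w2 + 3 * w3 ∧
    jacBracket Ω w2 w3 = 2 * (w2 * w3) ∧
    jacBracket Ω w3 w1 = 2 * (w3 * w1) ∧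
    φ w1 = w1 ∧ φ w2 = w2 ∧ φ w3 = w3 := by
  simp only [jacBracket_X_one_X_zero_add_X_two, jacBracket_X_zero_add_X_two_X_zero_sq,
    jacBracket_X_zero_sq_X_one, pderiv_zero_superpotential, pderiv_one_superpotential,
    pderiv_two_superpotential]
  refine ⟨by ring, by ring, by ring, by simp, ?_, ?_⟩
  · simp
    ring
  · simp

/-- For the bracket with superpotential `Ω = x₁³ + x₁²x₂ + x₁x₂x₃` and
`w₁ = x₂`, `w₂ = x₁ + x₃`, `w₃ = x₁²`:
`{w₁,w₂} = w₁w₂ + 3w₃`, `{w₂,w₃} = 2w₂w₃`, `{w₃,w₁} = 2w₃w₁`, and all `wᵢ`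
are invariant under `φ : x₁ ↦ −x₁, x₂ ↦ x₂, x₃ ↦ 2x₁ + x₃`. -/
theorem stmt_18 {k : Type*} [Field k] [CharZero k] :
    letI Ω : MvPolynomial (Fin 3) k := X 0 ^ 3 + X 0 ^ 2 * X 1 + X 0 * X 1 * X 2
    letI w1 : MvPolynomial (Fin 3) k := X 1
    letI w2 : MvPolynomial (Fin 3) k := X 0 + X 2
    letI w3 : MvPolynomial (Fin 3) k := X 0 ^ 2
    letI φ : MvPolynomial (Fin 3) k →ₐ[k] MvPolynomial (Fin 3) k :=
      aeval ![-X 0, X 1, 2 * X 0 + X 2]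
    jacBracket Ω w1 w2 = w1 * w2 + 3 * w3 ∧
    jacBracket Ω w2 w3 = 2 * (w2 * w3) ∧
    jacBracket Ω w3 w1 = 2 * (w3 * w1) ∧
    φ w1 = w1 ∧ φ w2 = w2 ∧ φ w3 = w3 :=
  stmt_18_general
end
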